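/- Let f₁, …, f_m : ℝⁿ → ℝ be continuously differentiable, let x ∈ ℝⁿ, and let d ∈ ℝⁿ be a descent direction at x, i.e. ⟨∇f_i(x), d⟩ < 0 for every i ∈ [m]. Assume each f_i is bounded below on the ray {x + t d : t ≥ 0}. Fix 0 < σ₁ < σ₂ < 1. Then there exist 0 < t_l < t_u such that for every t ∈ [t_l, t_u]: (a) f_i(x + t d) ≤ f_i(x) + σ₁ t 𝒟(x, d) for all i ∈ [m], and (b) 𝒟(x + t d, d) ≥ σ₂ 𝒟(x, d), where 𝒟(y, d) := max_{i∈[m]} ⟨∇f_i(y), d⟩. -/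

import Mathlib

open RealInnerProductSpace

/-- `𝒟(y, d) = max_i ⟪∇f_i(y), d⟫`, the multiobjective directional-derivative measure. -/
noncomputable def Dmax {n m : ℕ} (hm : 0 < m) (f : Fin m → EuclideanSpace ℝ (Fin n) → ℝ)
    (y d : EuclideanSpace ℝ (Fin n)) : ℝ :=
  Finset.univ.sup' ⟨⟨0, hm⟩, Finset.mem_univ _⟩ fun i => ⟪gradient (f i) y, d⟫

/-- existence of an interval of step sizes satisfying the multiobjective
Wolfe line-search conditions along a descent direction, when each objective is
bounded below on the ray. -/
theorem stmt_9 (n m : ℕ) (hm : 0 < m) (f : Fin m → EuclideanSpace ℝ (Fin n) → ℝ)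
    (hf : ∀ i, ContDiff ℝ 1 (f i)) (x d : EuclideanSpace ℝ (Fin n))
    (hdesc : ∀ i : Fin m, ⟪gradient (f i) x, d⟫ < 0)
    (hbdd : ∀ i : Fin m, ∃ c : ℝ, ∀ t : ℝ, 0 ≤ t → c ≤ f i (x + t • d))
    (σ₁ σ₂ : ℝ) (hσ₁ : 0 < σ₁) (hσ₁₂ : σ₁ < σ₂) (hσ₂ : σ₂ < 1) :
    ∃ tl tu : ℝ, 0 < tl ∧ tl < tu ∧ ∀ t ∈ Set.Icc tl tu,
      (∀ i : Fin m, f i (x + t • d) ≤ f i x + σ₁ * t * Dmax hm f x d) ∧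
      σ₂ * Dmax hm f x d ≤ Dmax hm f (x + t • d) d := by
  classical
  have hne : (Finset.univ : Finset (Fin m)).Nonempty := ⟨⟨0, hm⟩, Finset.mem_univ _⟩
  set D := Dmax hm f x d with hDdef
  set ψ : Fin m → ℝ → ℝ := fun i t => fderiv ℝ (f i) (x + t • d) d with hψdef
  have hgrad : ∀ (i : Fin m) (y v : EuclideanSpace ℝ (Fin n)),
      ⟪gradient (f i) y, v⟫ = fderiv ℝ (f i) y v := by
    intro i y v
    simp [gradient, InnerProductSpace.toDual_symm_apply]
  set Φ : ℝ → ℝ := fun t => Finset.univ.sup' hne (fun i => ψ i t) with hΦdef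
  have hline : Continuous (fun t : ℝ => x + t • d) := by continuity
  have hDm : ∀ t : ℝ, Dmax hm f (x + t • d) d = Φ t := by
    intro t
    unfold Dmax
    apply Finset.sup'_congr _ rfl
    intro i _
    exact hgrad i _ d
  have hΦ0 : Φ 0 = D := by
    rw [← hDm 0]
    norm_num
    exact hDdef.symm
  have hDneg : D < 0 := by
    rw [← hΦ0]
    rw [Finset.sup'_lt_iff]
    intro i _
    have := hdesc i
    rw [hgrad] at this
    simpa [hψdef] using this
  have hψle : ∀ (i : Fin m) (t : ℝ), ψ i t ≤ Φ t := by
    intro i t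
    exact Finset.le_sup' (fun j => ψ j t) (Finset.mem_univ i)
  have hψcont : ∀ i : Fin m, Continuous (ψ i) := by
    intro i
    exact (((hf i).continuous_fderiv one_ne_zero).comp hline).clm_apply continuous_const
  have hΦcont : Continuous Φ :=
    Continuous.finset_sup'_apply hne (fun i _ => hψcont i)
  have hfcont : ∀ i : Fin m, Continuous (fun t : ℝ => f i (x + t • d)) := by
    intro i
    exact (hf i).continuous.comp hline
  have hderiv : ∀ (i : Fin m) (t : ℝ),
      HasDerivAt (fun s : ℝ => f i (x + s • d)) (ψ i t) t := by
    intro i t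
    have h1 : HasDerivAt (fun s : ℝ => x + s • d) d t := by
      simpa using ((hasDerivAt_id t).smul_const d).const_add x
    have h2 := (((hf i).differentiable one_ne_zero) (x + t • d)).hasFDerivAt
    exact h2.comp_hasDerivAt t h1
  -- decrease lemma
  have hdec : ∀ (i : Fin m) (c T : ℝ), 0 < T → (∀ s ∈ Set.Ioo (0:ℝ) T, ψ i s < c) →
      f i (x + T • d) - f i x < c * T := by
    intro i c T hT hs
    set g : ℝ → ℝ := fun t => f i (x + t • d) - c * t with hg
    have hgd : ∀ t : ℝ, HasDerivAt g (ψ i t - c) t := by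
      intro t
      exact (hderiv i t).sub (by simpa using (hasDerivAt_id t).const_mul c)
    have hanti : StrictAntiOn g (Set.Icc 0 T) := by
      apply strictAntiOn_of_deriv_neg (convex_Icc 0 T)
      · exact ((hfcont i).sub (continuous_const.mul continuous_id)).continuousOn
      · intro s hsmem
        rw [interior_Icc] at hsmem
        rw [(hgd s).deriv]
        have := hs s hsmem
        linarith
    have := hanti (Set.left_mem_Icc.mpr hT.le) (Set.right_mem_Icc.mpr hT.le) hT
    simp only [hg] at this
    norm_num at this
    linarith
  set σ' : ℝ := (σ₁ + σ₂) / 2 with hσ'def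
  have hσ'₁ : σ₁ < σ' := by simp [hσ'def]; linarith
  have hσ'₂ : σ' < σ₂ := by simp [hσ'def]; linarith
  have hσ'pos : 0 < σ' := by linarith
  have hσ'lt1 : σ' < 1 := by linarith
  have hσ'Dneg : σ' * D < 0 := mul_neg_of_pos_of_neg hσ'pos hDneg
  set S : Set ℝ := {t | 0 ≤ t ∧ σ' * D ≤ Φ t} with hSdef
  have hSbdd : BddBelow S := ⟨0, fun y hy => hy.1⟩
  have hSne : S.Nonempty := by
    by_contra hc
    rw [Set.not_nonempty_iff_eq_empty] at hc
    have hall : ∀ t : ℝ, 0 ≤ t → Φ t < σ' * D := by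
      intro t ht
      by_contra h
      push_neg at h
      have : t ∈ S := ⟨ht, h⟩
      rw [hc] at this
      exact this
    set i0 : Fin m := ⟨0, hm⟩
    obtain ⟨c, hc'⟩ := hbdd i0
    set q : ℝ := (c - f i0 x) / (σ' * D) with hq
    set T : ℝ := max 1 (q + 1) with hT
    have hTpos : (0:ℝ) < T := lt_of_lt_of_le one_pos (le_max_left _ _)
    have hTq : q < T := lt_of_lt_of_le (by linarith) (le_max_right _ _)
    have hmain := hdec i0 (σ' * D) T hTpos (fun s hs =>
      lt_of_le_of_lt (hψle i0 s) (hall s hs.1.le))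
    have hbd := hc' T hTpos.le
    have hqe : σ' * D * q = c - f i0 x := by
      rw [hq, mul_comm, div_mul_cancel₀ _ hσ'Dneg.ne]
    have : σ' * D * T < σ' * D * q := by
      exact mul_lt_mul_of_neg_left hTq hσ'Dneg
    nlinarith [hmain, hbd, hqe]
  have hSclosed : IsClosed S := by
    have : S = {t : ℝ | 0 ≤ t} ∩ {t : ℝ | σ' * D ≤ Φ t} := rfl
    rw [this]
    exact (isClosed_le continuous_const continuous_id).inter
      (isClosed_le continuous_const hΦcont)
  set T : ℝ := sInf S with hTdef
  have hTS : T ∈ S := hSclosed.csInf_mem hSne hSbdd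
  have hTpos : 0 < T := by
    rcases lt_or_eq_of_le hTS.1 with h | h
    · exact h
    · exfalso
      have h2 := hTS.2
      rw [← h, hΦ0] at h2
      nlinarith
  have hbefore : ∀ s : ℝ, 0 ≤ s → s < T → Φ s < σ' * D := by
    intro s h0 hsT
    by_contra h
    push_neg at h
    exact absurd (csInf_le hSbdd ⟨h0, h⟩) (not_le.mpr hsT)
  -- strict (a) at T
  have hA : ∀ i : Fin m, f i (x + T • d) < f i x + σ₁ * T * D := by
    intro i
    have := hdec i (σ₁ * D) T hTpos (fun s hs => by
      have h1 := hψle i s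
      have h2 := hbefore s hs.1.le hs.2
      nlinarith)
    nlinarith
  -- strict (b) at T
  have hB : σ₂ * D < Φ T := by
    have := hTS.2
    nlinarith
  -- continuity step
  have hacont : ∀ i : Fin m, Continuous (fun t : ℝ => f i x + σ₁ * t * D - f i (x + t • d)) := by
    intro i
    have h1 : Continuous (fun t : ℝ => f i x + σ₁ * t * D) :=
      continuous_const.add ((continuous_const.mul continuous_id).mul continuous_const)
    exact h1.sub (hfcont i)
  set F : ℝ → ℝ := fun t =>
    Finset.univ.inf' hne (fun i => f i x + σ₁ * t * D - f i (x + t • d)) with hFdef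
  have hFcont : Continuous F :=
    Continuous.finset_inf'_apply hne (fun i _ => hacont i)
  set G : ℝ → ℝ := fun t => min (F t) (Φ t - σ₂ * D) with hGdef
  have hGcont : Continuous G := hFcont.min (hΦcont.sub continuous_const)
  have hGT : 0 < G T := by
    apply lt_min
    · rw [hFdef]
      rw [Finset.lt_inf'_iff]
      intro i _
      have := hA i
      linarith
    · linarith
  have hopen : IsOpen (G ⁻¹' Set.Ioi 0) := isOpen_Ioi.preimage hGcont
  obtain ⟨δ, hδpos, hball⟩ := Metric.isOpen_iff.mp hopen T hGT
  set δ' : ℝ := min (δ / 2) (T / 2) with hδ'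
  have hδ'pos : 0 < δ' := lt_min (by linarith) (by linarith)
  refine ⟨T - δ', T + δ', by
    have : δ' ≤ T / 2 := min_le_right _ _
    linarith, by linarith, ?_⟩
  intro t ht
  have htball : t ∈ Metric.ball T δ := by
    rw [Metric.mem_ball, Real.dist_eq]
    have h1 : δ' ≤ δ / 2 := min_le_left _ _
    rw [abs_lt]
    constructor
    · have := ht.1; linarith
    · have := ht.2; linarith
  have hGt : 0 < G t := hball htball
  rw [hGdef] at hGt
  have h1 := lt_of_lt_of_le hGt (min_le_left _ _)
  have h2 := lt_of_lt_of_le hGt (min_le_right _ _)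
  rw [hFdef, Finset.lt_inf'_iff] at h1
  constructor
  · intro i
    have := h1 i (Finset.mem_univ i)
    linarith
  · rw [hDm t]
    linarith
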